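/- arXiv:2308.00991 — 2 statements merged into one kernel-verified Lean document; each statement's English description precedes it below -/
import Mathlib

section
/- The set of *-classes of alternating-walk strings on (Q(n), I(n)) is in bijection with the set S = {(a,b,η) : 0 ≤ a < b ≤ n, η ∈ {+1,−1}}. The bijection sends a string w with f_w strictly increasing to (f_w(0), f_w(m), η), where η = +1 if the last letter of w is an honest arrow and η = −1 otherwise. -/
/-!  Combinatorics of walks and strings on the quiver `Q(n)` with relations `I(n)`.

`Q(n)` has vertices `0,…,n` and arrows `α i : i+1 → i` and `β i : i → i+1`
for `0 ≤ i ≤ n-1`.  A letter is an arrow or a formal inverse of an arrow. -/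

/-- A letter of a walk on `Q(n)`: an arrow `α i` or `β i`, or a formal
inverse `α i *` (`ia i`) or `β i *` (`ib i`). -/
inductive Letter where
  | a (i : ℕ)   -- the arrow `α i : i+1 → i`
  | b (i : ℕ)   -- the arrow `β i : i → i+1`
  | ia (i : ℕ)  -- the formal inverse of `α i`
  | ib (i : ℕ)  -- the formal inverse of `β i`
  deriving DecidableEq

namespace Letter

/-- The `*`-operation on letters (formal inversion). -/
def star : Letter → Letter
  | a i => ia i
  | ia i => a i
  | b i => ib i
  | ib i => b i

/-- Source of a letter. -/
def src : Letter → ℕ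
  | a i => i + 1
  | ia i => i
  | b i => i
  | ib i => i + 1

/-- Target of a letter. -/
def tgt : Letter → ℕ
  | a i => i
  | ia i => i + 1
  | b i => i + 1
  | ib i => i

/-- Whether a letter is an honest arrow of `Q(n)` (not a formal inverse). -/
def honest : Letter → Bool
  | a _ => true
  | b _ => true
  | ia _ => false
  | ib _ => false

/-- Whether a letter is a letter of the quiver `Q(n)` (arrows `α i, β i` only
exist for `i < n`). -/
def valid (n : ℕ) : Letter → Prop
  | a i => i < n
  | b i => i < n
  | ia i => i < n
  | ib i => i < n

end Letter

open Letter

/-- A walk `γ₁γ₂…γₘ` on `Q(n)`, encoded as the list `[γ₁, …, γₘ]`: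
all letters exist in `Q(n)` and `t (γ_{k+1}) = s (γ_k)` for consecutive letters. -/
def IsWalk (n : ℕ) (w : List Letter) : Prop :=
  (∀ c ∈ w, c.valid n) ∧ w.Chain' (fun c d => d.tgt = c.src)

/-- A walk is reduced if no letter is immediately followed by its formal inverse:
`γ_k ≠ γ_{k+1}*`. -/
def IsReducedWalk (w : List Letter) : Prop :=
  w.Chain' (fun c d => c ≠ d.star)

/-- The formal inverse `w* = γₘ* … γ₁*` of a walk `w = γ₁…γₘ`. -/
def starWalk (w : List Letter) : List Letter :=
  (w.map Letter.star).reverse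

/-- The source `s(w) = s(γₘ)` of a (nonempty) walk. -/
def walkSrc (w : List Letter) : ℕ := (w.getLastD (Letter.a 0)).src

/-- The function `f_w : {0,…,m} → {0,…,n}` attached to a walk `w = γ₁…γₘ`:
`f_w 0 = s(γₘ)` and `f_w j = t(γ_{m-j+1})` for `1 ≤ j ≤ m`. -/
def fW (w : List Letter) (j : ℕ) : ℕ :=
  if j = 0 then (w.getLastD (Letter.a 0)).src
  else ((w.getD (w.length - j) (Letter.a 0))).tgt

/-- The target `t(w) = t(γ₁)` of a (nonempty) walk. -/
def walkTgt (w : List Letter) : ℕ := fW w w.length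

/-- The length-two paths which are monomials appearing in the generators of the
ideal `I(n)`: `α i · α (i+1)`, `β (i+1) · β i`, `α j · β j` (coming from `α 0 β 0`
and from the binomial relations `β i α i - α (i+1) β (i+1)`, `0 ≤ i ≤ n-2`), and
`β i · α i` for `0 ≤ i ≤ n-2`.  A pair `(x, y)` stands for the path `x y`
(first traverse `y`, then `x`). -/
def ForbiddenPair (n : ℕ) (x y : Letter) : Prop :=
  (∃ i, x = Letter.a i ∧ y = Letter.a (i + 1)) ∨
  (∃ i, x = Letter.b (i + 1) ∧ y = Letter.b i) ∨
  (∃ j, x = Letter.a j ∧ y = Letter.b j) ∨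
  (∃ i, i + 2 ≤ n ∧ x = Letter.b i ∧ y = Letter.a i)

/-- A string on `(Q(n), I(n))`: a reduced walk such that no path contained in it
(i.e. no contiguous subword of `w` consisting of honest arrows, and no formal
inverse of such a subword) is a monomial appearing in a generator of `I(n)`.
Since all monomials appearing in the generators of `I(n)` have length two, this
amounts to forbidding the pairs of `ForbiddenPair` in both orientations. -/
def IsString (n : ℕ) (w : List Letter) : Prop :=
  IsWalk n w ∧ IsReducedWalk w ∧
    ∀ x y : Letter, [x, y] <:+: w →
      ¬ ForbiddenPair n x y ∧ ¬ ForbiddenPair n y.star x.star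

/-- An alternating walk: `γ_k` is an honest arrow iff `γ_{k+1}` is a formal
inverse, for all `k < m`. -/
def IsAlternating (w : List Letter) : Prop :=
  w.Chain' (fun c d => c.honest = !d.honest)

/-- A path on `Q(n)`: a walk all of whose letters are honest arrows. -/
def IsPath (n : ℕ) (p : List Letter) : Prop :=
  IsWalk n p ∧ ∀ c ∈ p, c.honest = true

/-- The `h`-fold concatenation `w^h` of a walk with itself. -/
def powWalk (w : List Letter) (h : ℕ) : List Letter :=
  (List.replicate h w).flatten

/-!
Every letter of `Q(n)` moves one step up (`β i`, `α i*`) or one step down (`α i`, `β i*`).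
Consecutive letters of an alternating walk have opposite honesty, so if the walk turned back at a
vertex, the second letter would be the formal inverse of the first. Hence a reduced alternating
walk is monotone, and up to `*` it is the ascending alternating walk determined by its end
vertices `a < b` and by the honesty of its last letter. The monomials of `I(n)` are products of
two honest arrows, so alternating walks never contain them.
-/

lemma List.forall_or_forall_not_of_isChain_iff {α : Type*} {P : α → Prop} :
    ∀ {l : List α}, l.IsChain (fun x y => P x ↔ P y) → (∀ x ∈ l, P x) ∨ ∀ x ∈ l, ¬ P x
  | [], _ => by simp
  | [x], _ => by by_cases hx : P x <;> simp [hx]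
  | x :: y :: l, h => by
    rw [List.isChain_cons_cons] at h
    rcases List.forall_or_forall_not_of_isChain_iff h.2 with hl | hl
    · exact .inl (List.forall_mem_cons.2 ⟨h.1.2 (hl y List.mem_cons_self), hl⟩)
    · exact .inr (List.forall_mem_cons.2 ⟨fun hx => hl y List.mem_cons_self (h.1.1 hx), hl⟩)

lemma List.IsChain.and {α : Type*} {R S : α → α → Prop} :
    ∀ {l : List α}, l.IsChain R → l.IsChain S → l.IsChain fun a b => R a b ∧ S a b
  | [], _, _ => .nil
  | [_], _, _ => .singleton _
  | _ :: _ :: _, hR, hS =>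
    .cons_cons ⟨hR.rel, hS.rel⟩ (List.IsChain.and hR.tail hS.tail)

lemma Function.Involutive.eq_or_eq_iff {α : Type*} {f : α → α} (hf : Function.Involutive f)
    {x y z : α} (hy : y = x ∨ y = f x) : (z = x ∨ z = f x) ↔ (z = y ∨ z = f y) := by
  rcases hy with rfl | rfl <;> simp [hf _, or_comm]

namespace Letter

def up (j : ℕ) : Bool → Letter
  | true => b j
  | false => ia j

def Ascends (c : Letter) : Prop := c.tgt = c.src + 1

@[simp] lemma src_up (j : ℕ) (h : Bool) : (up j h).src = j := by cases h <;> rfl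
@[simp] lemma tgt_up (j : ℕ) (h : Bool) : (up j h).tgt = j + 1 := by cases h <;> rfl
@[simp] lemma honest_up (j : ℕ) (h : Bool) : (up j h).honest = h := by cases h <;> rfl
@[simp] lemma valid_up (n j : ℕ) (h : Bool) : (up j h).valid n ↔ j < n := by cases h <;> rfl
@[simp] lemma src_star (c : Letter) : c.star.src = c.tgt := by cases c <;> rfl
@[simp] lemma tgt_star (c : Letter) : c.star.tgt = c.src := by cases c <;> rfl
@[simp] lemma honest_star (c : Letter) : c.star.honest = !c.honest := by cases c <;> rfl
@[simp] lemma valid_star (n : ℕ) (c : Letter) : c.star.valid n ↔ c.valid n := by cases c <;> rfl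
@[simp] lemma star_star (c : Letter) : c.star.star = c := by cases c <;> rfl

lemma star_involutive : Function.Involutive star := star_star

lemma up_ne_star_up (i j : ℕ) (h h' : Bool) : up i h ≠ (up j h').star := by
  cases h <;> cases h' <;> simp [up, star]

lemma eq_up_of_ascends {c : Letter} (hc : c.Ascends) : c = up c.src c.honest := by
  cases c <;> simp only [Ascends, src, tgt] at hc <;> first | omega | rfl

lemma ascends_star_iff {c : Letter} : c.star.Ascends ↔ ¬ c.Ascends := by
  cases c <;> simp [Ascends, star, src, tgt] <;> omega

lemma ascends_iff_of_turn {c d : Letter} (hw : d.tgt = c.src) (hr : c ≠ d.star)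
    (ha : c.honest = !d.honest) : c.Ascends ↔ d.Ascends := by
  cases c <;> cases d <;> simp_all [Ascends, star, src, tgt, honest] <;> omega

end Letter

@[simp] lemma mem_starWalk {c : Letter} {w : List Letter} : c ∈ starWalk w ↔ c.star ∈ w := by
  simp [starWalk, List.mem_map_of_involutive Letter.star_involutive]

@[simp] lemma length_starWalk (w : List Letter) : (starWalk w).length = w.length := by
  simp [starWalk]

@[simp] lemma starWalk_starWalk (w : List Letter) : starWalk (starWalk w) = w := by
  simp [starWalk, Function.comp_def]

lemma starWalk_involutive : Function.Involutive starWalk := starWalk_starWalk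

lemma IsWalk.starWalk {n : ℕ} {w : List Letter} (hw : IsWalk n w) : IsWalk n (starWalk w) := by
  refine ⟨fun c hc => ?_, ?_⟩
  · simpa using hw.1 _ (mem_starWalk.1 hc)
  · exact List.isChain_reverse.2 <| (List.isChain_map _).2 <| hw.2.imp fun _ _ h => by simp [h]

lemma IsAlternating.starWalk {w : List Letter} (hw : IsAlternating w) :
    IsAlternating (starWalk w) :=
  List.isChain_reverse.2 <| (List.isChain_map _).2 <| hw.imp fun _ _ h => by simp [h]

lemma honest_of_forbiddenPair {n : ℕ} {x y : Letter} (h : ForbiddenPair n x y) :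
    x.honest ∧ y.honest := by
  rcases h with ⟨_, rfl, rfl⟩ | ⟨_, rfl, rfl⟩ | ⟨_, rfl, rfl⟩ | ⟨_, _, rfl, rfl⟩ <;> simp [honest]

lemma IsString.of_isAlternating {n : ℕ} {w : List Letter} (hw : IsWalk n w)
    (hr : IsReducedWalk w) (ha : IsAlternating w) : IsString n w := by
  refine ⟨hw, hr, fun x y hxy => ?_⟩
  have hpair : [x, y].IsChain fun c d => c.honest = !d.honest := List.IsChain.infix ha hxy
  have hxy : x.honest = !y.honest := hpair.rel
  refine ⟨fun hf => ?_, fun hf => ?_⟩ <;>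
    · have := honest_of_forbiddenPair hf
      simp_all

section AscWalk

/-- The ascending alternating walk of length `m` from vertex `a` whose last letter `γₘ` is
`up a h`. -/
def ascWalk (a : ℕ) (h : Bool) : ℕ → List Letter
  | 0 => []
  | m + 1 => up (a + m) (xor h m.bodd) :: ascWalk a h m

variable (a : ℕ) (h : Bool)

@[simp] lemma length_ascWalk (m : ℕ) : (ascWalk a h m).length = m := by
  induction m <;> simp [ascWalk, *]

lemma mem_ascWalk {c : Letter} {m : ℕ} :
    c ∈ ascWalk a h m ↔ ∃ k < m, c = up (a + k) (xor h k.bodd) := by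
  induction m with
  | zero => simp [ascWalk]
  | succ m ih => simp only [ascWalk, List.mem_cons, ih, Nat.exists_lt_succ_right, or_comm]

lemma getElem_ascWalk {m i : ℕ} (hi : i < (ascWalk a h m).length) :
    (ascWalk a h m)[i] = up (a + (m - 1 - i)) (xor h (m - 1 - i).bodd) := by
  induction m generalizing i with
  | zero => simp at hi
  | succ m ih =>
    cases i with
    | zero => simp [ascWalk]
    | succ i => simp [ascWalk, ih, show m - (i + 1) = m - 1 - i by omega]

lemma getLastD_ascWalk (m : ℕ) (x : Letter) : (ascWalk a h (m + 1)).getLastD x = up a h := by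
  induction m generalizing x with
  | zero => simp [ascWalk]
  | succ m ih => rw [ascWalk, List.getLastD_cons, ih]

lemma isChain_ascWalk {R : Letter → Letter → Prop}
    (hR : ∀ k, R (up (a + (k + 1)) (xor h (k + 1).bodd)) (up (a + k) (xor h k.bodd))) (m : ℕ) :
    (ascWalk a h m).IsChain R := by
  induction m with
  | zero => exact .nil
  | succ m ih =>
    cases m with
    | zero => exact .singleton _
    | succ m => exact .cons_cons (hR m) ih

lemma isWalk_ascWalk_iff {n m : ℕ} (hm : 0 < m) : IsWalk n (ascWalk a h m) ↔ a + m ≤ n := by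
  refine ⟨fun hw => ?_, fun hle => ⟨fun c hc => ?_, isChain_ascWalk a h (by simp [add_assoc]) m⟩⟩
  · have := hw.1 _ ((mem_ascWalk a h).2 ⟨m - 1, by omega, rfl⟩)
    simp only [valid_up] at this
    omega
  · obtain ⟨k, hk, rfl⟩ := (mem_ascWalk a h).1 hc
    simp only [valid_up]
    omega

lemma isReducedWalk_ascWalk (m : ℕ) : IsReducedWalk (ascWalk a h m) :=
  isChain_ascWalk a h (fun _ => up_ne_star_up _ _ _ _) m

lemma isAlternating_ascWalk (m : ℕ) : IsAlternating (ascWalk a h m) :=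
  isChain_ascWalk a h (by simp [Nat.bodd_succ]) m

lemma fW_ascWalk {m j : ℕ} (hm : 0 < m) (hj : j ≤ m) : fW (ascWalk a h m) j = a + j := by
  obtain ⟨m, rfl⟩ := Nat.exists_eq_succ_of_ne_zero hm.ne'
  unfold fW
  split_ifs with hj0
  · rw [getLastD_ascWalk, src_up, hj0, add_zero]
  · rw [length_ascWalk, List.getD_eq_getElem _ _ (by simp; omega), getElem_ascWalk, tgt_up]
    omega

lemma strictMonoOn_fW_ascWalk {m : ℕ} (hm : 0 < m) :
    StrictMonoOn (fW (ascWalk a h m)) (Set.Iic (ascWalk a h m).length) := by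
  intro i hi j hj hij
  simp only [length_ascWalk, Set.mem_Iic] at hi hj
  rw [fW_ascWalk a h hm hi, fW_ascWalk a h hm hj]
  omega

lemma not_strictMonoOn_fW_starWalk_ascWalk {m : ℕ} (hm : 0 < m) :
    ¬ StrictMonoOn (fW (starWalk (ascWalk a h m)))
      (Set.Iic (starWalk (ascWalk a h m)).length) := by
  obtain ⟨m, rfl⟩ : ∃ k, m = k + 1 := ⟨m - 1, by omega⟩
  have hsrc : fW (starWalk (ascWalk a h (m + 1))) 0 = a + m + 1 := by
    simp [fW, starWalk, ascWalk]
  have htgt : fW (starWalk (ascWalk a h (m + 1))) (m + 1) = a := by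
    simp [fW, starWalk, getElem_ascWalk]
  intro hmono
  have := hmono (Set.mem_Iic.2 (Nat.zero_le _)) (by simp) (Nat.succ_pos m)
  rw [hsrc, htgt] at this
  omega

end AscWalk

lemma eq_ascWalk_of_forall_ascends {w : List Letter} (hw : w.IsChain fun c d => d.tgt = c.src)
    (ha : IsAlternating w) (hup : ∀ c ∈ w, c.Ascends) : ∃ a h, w = ascWalk a h w.length := by
  induction w with
  | nil => exact ⟨0, true, rfl⟩
  | cons c rest ih =>
    obtain ⟨a, h, hrest⟩ := ih hw.tail ha.tail fun d hd => hup d (List.mem_cons_of_mem _ hd)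
    have hc : c = up c.src c.honest := eq_up_of_ascends (hup c List.mem_cons_self)
    cases hlen : rest.length with
    | zero =>
      refine ⟨c.src, c.honest, ?_⟩
      simpa [List.length_eq_zero_iff.1 hlen, ascWalk] using hc
    | succ m =>
      rw [hlen] at hrest
      have hcons : rest = up (a + m) (xor h m.bodd) :: ascWalk a h m := hrest
      rw [hcons] at hw ha
      have hsrc : c.src = a + (m + 1) := by simpa [add_assoc] using hw.rel.symm
      have hhonest : c.honest = xor h (m + 1).bodd := by simpa [Nat.bodd_succ] using ha.rel
      refine ⟨a, h, ?_⟩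
      rw [List.length_cons, hlen, ascWalk, ← hrest, ← hsrc, ← hhonest, ← hc]

theorem exists_eq_ascWalk_or_eq_starWalk_ascWalk {n : ℕ} {w : List Letter} (hw : IsWalk n w)
    (hr : IsReducedWalk w) (ha : IsAlternating w) (hne : w ≠ []) :
    ∃ a h, a + w.length ≤ n ∧
      (w = ascWalk a h w.length ∨ w = starWalk (ascWalk a h w.length)) := by
  have hlen : 0 < w.length := List.length_pos_iff.2 hne
  have hturn : w.IsChain fun c d => c.Ascends ↔ d.Ascends :=
    ((hw.2.and hr).and ha).imp fun _ _ ⟨⟨hw, hr⟩, ha⟩ => ascends_iff_of_turn hw hr ha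
  rcases List.forall_or_forall_not_of_isChain_iff hturn with hup | hdown
  · obtain ⟨a, h, hw'⟩ := eq_ascWalk_of_forall_ascends hw.2 ha hup
    refine ⟨a, h, (isWalk_ascWalk_iff a h hlen).1 (hw' ▸ hw), .inl hw'⟩
  · have hup : ∀ c ∈ starWalk w, c.Ascends := fun c hc => by
      simpa using ascends_star_iff.2 (hdown _ (mem_starWalk.1 hc))
    obtain ⟨a, h, hw'⟩ := eq_ascWalk_of_forall_ascends hw.starWalk.2 ha.starWalk hup
    rw [length_starWalk] at hw'
    refine ⟨a, h, (isWalk_ascWalk_iff a h hlen).1 (hw' ▸ hw.starWalk), .inr ?_⟩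
    rw [← hw', starWalk_starWalk]

noncomputable def endpointData (w : List Letter) : ℕ × ℕ × ℤ :=
  (fW w 0, fW w w.length, if (w.getLastD (Letter.a 0)).honest then 1 else -1)

lemma endpointData_ascWalk (a : ℕ) (h : Bool) {m : ℕ} (hm : 0 < m) :
    endpointData (ascWalk a h m) = (a, a + m, if h then 1 else -1) := by
  obtain ⟨m, rfl⟩ : ∃ k, m = k + 1 := ⟨m - 1, by omega⟩
  rw [endpointData, length_ascWalk, fW_ascWalk a h hm (Nat.zero_le _), fW_ascWalk a h hm le_rfl,
    getLastD_ascWalk, honest_up, add_zero]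

abbrev AltString (n : ℕ) := {w : List Letter // IsString n w ∧ IsAlternating w ∧ 0 < w.length}

namespace AltString

variable {n : ℕ}

open Classical in
noncomputable def label (w : AltString n) : ℕ × ℕ × ℤ :=
  if StrictMonoOn (fW w.1) (Set.Iic w.1.length) then endpointData w.1
  else endpointData (starWalk w.1)

lemma exists_ascWalk (w : AltString n) : ∃ a h m, 0 < m ∧ a + m ≤ n ∧
    (w.1 = ascWalk a h m ∨ w.1 = starWalk (ascWalk a h m)) := by
  obtain ⟨w, ⟨hw, hr, -⟩, ha, hlen⟩ := w
  obtain ⟨a, h, hle, hw'⟩ :=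
    exists_eq_ascWalk_or_eq_starWalk_ascWalk hw hr ha (List.length_pos_iff.1 hlen)
  exact ⟨a, h, w.length, hlen, hle, hw'⟩

lemma label_eq {w : AltString n} {a : ℕ} {h : Bool} {m : ℕ} (hm : 0 < m)
    (hw : w.1 = ascWalk a h m ∨ w.1 = starWalk (ascWalk a h m)) :
    w.label = (a, a + m, if h then 1 else -1) := by
  rcases hw with hw | hw
  · rw [label, hw, if_pos (strictMonoOn_fW_ascWalk a h hm), endpointData_ascWalk a h hm]
  · rw [label, hw, if_neg (not_strictMonoOn_fW_starWalk_ascWalk a h hm), starWalk_starWalk,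
      endpointData_ascWalk a h hm]

lemma label_eq_iff {w : AltString n} {a : ℕ} {h : Bool} {m : ℕ} (hm : 0 < m) :
    w.label = (a, a + m, if h then 1 else -1) ↔
      (w.1 = ascWalk a h m ∨ w.1 = starWalk (ascWalk a h m)) := by
  refine ⟨fun hlabel => ?_, label_eq hm⟩
  obtain ⟨a', h', m', hm', -, hw⟩ := exists_ascWalk w
  rw [label_eq hm' hw, Prod.mk.injEq, Prod.mk.injEq] at hlabel
  obtain ⟨rfl, hlen, hsign⟩ := hlabel
  obtain rfl : m' = m := by omega
  obtain rfl : h' = h := by cases h <;> cases h' <;> simp_all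
  exact hw

end AltString

theorem stmt_8_general (n : ℕ) :
    ∃ φ : {w : List Letter // IsString n w ∧ IsAlternating w ∧ 0 < w.length} →
        ℕ × ℕ × ℤ,
      (∀ w, (φ w).1 < (φ w).2.1 ∧ (φ w).2.1 ≤ n ∧
        ((φ w).2.2 = 1 ∨ (φ w).2.2 = -1)) ∧
      (∀ w, StrictMonoOn (fW w.1) (Set.Iic w.1.length) →
        φ w = (fW w.1 0, fW w.1 w.1.length,
          if (w.1.getLastD (Letter.a 0)).honest then (1 : ℤ) else -1)) ∧
      (∀ w v, φ w = φ v ↔ (v.1 = w.1 ∨ v.1 = starWalk w.1)) ∧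
      (∀ a b : ℕ, ∀ η : ℤ, a < b → b ≤ n → (η = 1 ∨ η = -1) →
        ∃ w, φ w = (a, b, η)) := by
  refine ⟨AltString.label, fun w => ?_, fun w hmono => if_pos hmono, fun w v => ?_, ?_⟩
  · obtain ⟨a, h, m, hm, hle, hw⟩ := AltString.exists_ascWalk w
    rw [AltString.label_eq hm hw]
    cases h <;> simp <;> omega
  · obtain ⟨a, h, m, hm, -, hw⟩ := AltString.exists_ascWalk w
    rw [AltString.label_eq hm hw, eq_comm, AltString.label_eq_iff hm,
      starWalk_involutive.eq_or_eq_iff hw]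
  · intro a b η hab hbn hη
    have hlen : 0 < b - a := by omega
    refine ⟨⟨ascWalk a (decide (η = 1)) (b - a),
      IsString.of_isAlternating ((isWalk_ascWalk_iff _ _ hlen).2 (by omega))
        (isReducedWalk_ascWalk _ _ _) (isAlternating_ascWalk _ _ _),
      isAlternating_ascWalk _ _ _, by simpa using hlen⟩, ?_⟩
    rw [AltString.label_eq hlen (.inl rfl), Nat.add_sub_cancel' hab.le]
    rcases hη with rfl | rfl <;> simp

/-- the set of `*`-classes of alternating-walk strings on
`(Q(n), I(n))` is in bijection with `S = {(a,b,η) : 0 ≤ a < b ≤ n, η ∈ {±1}}`.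
Formally: there is a map `φ` from alternating strings of positive length to
`ℕ × ℕ × ℤ` landing in `S`, sending a string `w` with `f_w` strictly increasing
to `(f_w 0, f_w m, η)` where `η = 1` iff the last letter `γₘ` of `w` is an
honest arrow, such that `φ w = φ v` iff `w, v` are in the same `*`-class, and
every element of `S` is attained. -/
theorem stmt_8 (n : ℕ) (hn : 1 ≤ n) :
    ∃ φ : {w : List Letter // IsString n w ∧ IsAlternating w ∧ 0 < w.length} →
        ℕ × ℕ × ℤ,
      (∀ w, (φ w).1 < (φ w).2.1 ∧ (φ w).2.1 ≤ n ∧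
        ((φ w).2.2 = 1 ∨ (φ w).2.2 = -1)) ∧
      (∀ w, StrictMonoOn (fW w.1) (Set.Iic w.1.length) →
        φ w = (fW w.1 0, fW w.1 w.1.length,
          if (w.1.getLastD (Letter.a 0)).honest then (1 : ℤ) else -1)) ∧
      (∀ w v, φ w = φ v ↔ (v.1 = w.1 ∨ v.1 = starWalk w.1)) ∧
      (∀ a b : ℕ, ∀ η : ℤ, a < b → b ≤ n → (η = 1 ∨ η = -1) →
        ∃ w, φ w = (a, b, η)) :=
  stmt_8_general n
end

section
/- The only string module over B(n) that is not thin is M(β_{n-1}α_{n-1}); equivalently, for every string w on (Q(n), I(n)) other than β_{n-1}α_{n-1} and its formal inverse, the function f_w is injective, so each fiber f_w^{-1}(j) has at most one element. -/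
open Letter

/-!
A letter either ascends (`β i`, `α i *` : `i → i + 1`) or descends, and `f_w` moves by one
along each letter, so `f_w` is strictly monotone on a walk all of whose letters go the same way.
The relations of `I(n)` forbid every change of direction inside a string except
`β_{n-1} α_{n-1}` and its inverse, whose two ends both lie on the top vertex `n`: such a pair
cannot be extended on either side without leaving `{0, …, n}`, so it is the whole string.
-/

namespace Letter

def ascends : Letter → Bool
  | b _ => true
  | ia _ => true
  | a _ => false
  | ib _ => false

theorem tgt_eq_src_add_one {c : Letter} (h : c.ascends = true) : c.tgt = c.src + 1 := by
  cases c <;> simp_all [ascends, src, tgt]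

theorem src_eq_tgt_add_one {c : Letter} (h : c.ascends = false) : c.src = c.tgt + 1 := by
  cases c <;> simp_all [ascends, src, tgt]

theorem valid.src_le {n : ℕ} {c : Letter} (h : c.valid n) : c.src ≤ n := by
  cases c <;> simp only [valid, src] at h ⊢ <;> omega

theorem valid.tgt_le {n : ℕ} {c : Letter} (h : c.valid n) : c.tgt ≤ n := by
  cases c <;> simp only [valid, tgt] at h ⊢ <;> omega

end Letter

theorem IsString.infix {n : ℕ} {w v : List Letter} (hw : IsString n w) (hv : v <:+: w) :
    IsString n v :=
  ⟨⟨fun c hc => hw.1.1 c (hv.subset hc), hw.1.2.infix hv⟩, hw.2.1.infix hv,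
    fun x y hxy => hw.2.2 x y (hxy.trans hv)⟩

theorem isString_pair_iff {n : ℕ} {x y : Letter} :
    IsString n [x, y] ↔ x.valid n ∧ y.valid n ∧ y.tgt = x.src ∧ x ≠ y.star ∧
      ¬ ForbiddenPair n x y ∧ ¬ ForbiddenPair n y.star x.star := by
  have hinfix : ∀ u v : Letter, [u, v] <:+: [x, y] ↔ u = x ∧ v = y := fun u v =>
    ⟨fun h => by simpa using h.eq_of_length rfl,
      fun ⟨hu, hv⟩ => hu ▸ hv ▸ List.infix_refl _⟩
  simp only [IsString, IsWalk, IsReducedWalk, List.Chain', List.isChain_pair, hinfix,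
    List.mem_cons, List.not_mem_nil, or_false, forall_eq_or_imp, and_imp, forall_eq_apply_imp_iff,
    forall_eq]
  tauto

theorem IsString.pair_eq_of_ascends_ne {n : ℕ} {x y : Letter} (h : IsString n [x, y])
    (hxy : x.ascends ≠ y.ascends) :
    (x = b (n - 1) ∧ y = a (n - 1)) ∨ (x = ia (n - 1) ∧ y = ib (n - 1)) := by
  obtain ⟨hx, hy, hxy', hr, hf, hf'⟩ := isString_pair_iff.1 h
  cases x <;> cases y <;>
    simp_all [Letter.ascends, Letter.valid, Letter.src, Letter.tgt, Letter.star,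
      ForbiddenPair] <;> omega

theorem IsString.ends_eq_top_of_ascends_ne {n : ℕ} {x y : Letter} (h : IsString n [x, y])
    (hxy : x.ascends ≠ y.ascends) : x.ascends = true ∧ x.tgt = n ∧ y.src = n := by
  rcases h.pair_eq_of_ascends_ne hxy with ⟨rfl, rfl⟩ | ⟨rfl, rfl⟩ <;>
  · have hn : n - 1 < n := (isString_pair_iff.1 h).1
    exact ⟨rfl, by simp only [Letter.tgt]; omega, by simp only [Letter.src]; omega⟩

theorem IsString.ascends_eq_of_src_eq_top {n : ℕ} {x y : Letter} (h : IsString n [x, y])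
    (hx : x.src = n) : x.ascends = y.ascends := by
  by_contra hxy
  obtain ⟨hasc, htgt, -⟩ := h.ends_eq_top_of_ascends_ne hxy
  have := Letter.tgt_eq_src_add_one hasc
  omega

theorem IsString.eq_pair_of_infix_of_ascends_ne {n : ℕ} {w : List Letter} {x y : Letter}
    (hw : IsString n w) (h : [x, y] <:+: w) (hxy : x.ascends ≠ y.ascends) : w = [x, y] := by
  obtain ⟨s, t, rfl⟩ := h
  obtain ⟨hx, hxn, hyn⟩ := (hw.infix ⟨s, t, rfl⟩).ends_eq_top_of_ascends_ne hxy
  have hs : s = [] := by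
    rcases List.eq_nil_or_concat s with hs | ⟨s', u, rfl⟩
    · exact hs
    have hux : IsString n [u, x] := hw.infix ⟨s', y :: t, by simp⟩
    obtain ⟨hu, -, hxu, -⟩ := isString_pair_iff.1 hux
    have hua := (hux.ascends_eq_of_src_eq_top (hxu ▸ hxn)).trans hx
    have := Letter.tgt_eq_src_add_one hua
    have := hu.tgt_le
    omega
  have ht : t = [] := by
    rcases t with _ | ⟨z, t⟩
    · rfl
    have hyz : IsString n [y, z] := hw.infix ⟨s ++ [x], t, by simp⟩
    obtain ⟨-, hz, hzy, -⟩ := isString_pair_iff.1 hyz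
    have hza : z.ascends = false := by
      rw [← hyz.ascends_eq_of_src_eq_top hyn]
      simpa [hx] using hxy.symm
    have := Letter.src_eq_tgt_add_one hza
    have := hz.src_le
    omega
  simp [hs, ht]

theorem fW_succ {w : List Letter} {j : ℕ} (hj : j < w.length) :
    fW w (j + 1) = w[w.length - 1 - j].tgt := by
  rw [fW, if_neg j.succ_ne_zero, List.getD_eq_getElem _ _ (by omega)]
  congr 2
  omega

theorem fW_of_lt {w : List Letter} (hw : w.IsChain (fun c d => d.tgt = c.src)) {j : ℕ}
    (hj : j < w.length) :
    fW w j = w[w.length - 1 - j].src := by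
  rcases j with _ | j
  · simp only [fW, if_pos, List.getLastD_eq_getLast?,
      List.getLast?_eq_some_getLast (List.ne_nil_of_length_pos hj), Option.getD_some,
      List.getLast_eq_getElem, Nat.sub_zero]
  · rw [fW_succ (by omega)]
    simpa only [show w.length - 1 - (j + 1) + 1 = w.length - 1 - j by omega] using
      hw.getElem (w.length - 1 - (j + 1)) (by omega)

theorem strictMonoOn_fW {w : List Letter} (hw : w.IsChain (fun c d => d.tgt = c.src))
    (h : ∀ c ∈ w, c.ascends = true) : StrictMonoOn (fW w) (Set.Iic w.length) := by
  refine strictMonoOn_Iic_of_lt_succ fun j hj => ?_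
  rw [Order.succ_eq_add_one, fW_succ hj, fW_of_lt hw hj,
    Letter.tgt_eq_src_add_one (h _ (List.getElem_mem _))]
  exact Nat.lt_add_one _

theorem strictAntiOn_fW {w : List Letter} (hw : w.IsChain (fun c d => d.tgt = c.src))
    (h : ∀ c ∈ w, c.ascends = false) : StrictAntiOn (fW w) (Set.Iic w.length) := by
  refine strictAntiOn_Iic_of_succ_lt fun j hj => ?_
  rw [Order.succ_eq_add_one, fW_succ hj, fW_of_lt hw hj,
    Letter.src_eq_tgt_add_one (h _ (List.getElem_mem _))]
  exact Nat.lt_add_one _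

theorem injOn_fW_of_ascends_eq {w : List Letter} (hw : w.IsChain (fun c d => d.tgt = c.src))
    (h : ∀ x ∈ w, ∀ y ∈ w, x.ascends = y.ascends) :
    Set.InjOn (fW w) (Set.Iic w.length) := by
  by_cases hasc : ∀ c ∈ w, c.ascends = true
  · exact (strictMonoOn_fW hw hasc).injOn
  · push Not at hasc
    obtain ⟨c, hc, hca⟩ := hasc
    exact (strictAntiOn_fW hw fun d hd => by simpa [h d hd c hc] using hca).injOn

theorem stmt_12_general (n : ℕ) (w : List Letter) (hw : IsString n w)
    (h1 : w ≠ [Letter.b (n - 1), Letter.a (n - 1)])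
    (h2 : w ≠ [Letter.ia (n - 1), Letter.ib (n - 1)]) :
    Set.InjOn (fW w) (Set.Iic w.length) := by
  have hpair : w.IsChain (fun x y => x.ascends = y.ascends) := by
    refine (List.isChain_isInfix w).imp fun x y hinfix => ?_
    by_contra hturn
    have hw' := hw.eq_pair_of_infix_of_ascends_ne hinfix hturn
    rcases (hw.infix hinfix).pair_eq_of_ascends_ne hturn with ⟨rfl, rfl⟩ | ⟨rfl, rfl⟩
    exacts [h1 hw', h2 hw']
  exact injOn_fW_of_ascends_eq hw.1.2 (hpair.pairwise.forall_of_forall fun _ _ => rfl)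

/-- for every string `w` on `(Q(n), I(n))` other than
`β_{n-1} α_{n-1}` and its formal inverse `α_{n-1}* β_{n-1}*`, the function `f_w`
is injective on its domain `{0,…,m}`, so each fiber `f_w⁻¹(j)` has at most one
element; equivalently, the only non-thin string module is
`M(β_{n-1} α_{n-1})`. -/
theorem stmt_12 (n : ℕ) (hn : 1 ≤ n) (w : List Letter) (hw : IsString n w)
    (h1 : w ≠ [Letter.b (n - 1), Letter.a (n - 1)])
    (h2 : w ≠ [Letter.ia (n - 1), Letter.ib (n - 1)]) :
    Set.InjOn (fW w) (Set.Iic w.length) :=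
  stmt_12_general n w hw h1 h2
end
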